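/- Let E = E_{−2} ⊕ E_{−1} be a graded vector space concentrated in degrees −2 and −1, let ∂: E_{−2} → E_{−1} be a linear map regarded as a symmetric vector valued 1-form l_1 of degree +1 on E (this is an L∞-structure with l_2 = l_3 = 0, since ∂² = 0 holds automatically by degree reasons), and let α be a symmetric vector valued 2-form of degree 0 on E, i.e. a skew-symmetric bilinear map α: E_{−1} × E_{−1} → E_{−2}. If S + α is a weak Nijenhuis vector valued form with respect to ∂, then [X,Y] := ∂(α(X,Y)) defines a Lie bracket on E_{−1}, and X·f := α(X,∂f) defines a representation of the Lie algebra (E_{−1},[·,·]) on E_{−2}, i.e. [X,Y]·f = X·(Y·f) − Y·(X·f) for all X, Y ∈ E_{−1} and f ∈ E_{−2}. -/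

import Mathlib

open scoped DirectSum
open Classical

noncomputable section

namespace RN

section Core

variable (𝕜 : Type) [Field 𝕜] [CharZero 𝕜]
variable (E : ℤ → Type) [∀ i, AddCommGroup (E i)] [∀ i, Module 𝕜 (E i)]

/-- Raw vector-valued forms on the graded vector space `E`: for every arity `n` and every
vector of (input) degrees `ι`, a function on homogeneous tuples with values in the total
graded space `⨁ i, E i`. -/
abbrev RawForm : Type :=
  ∀ n : ℕ, ∀ ι : Fin n → ℤ, (∀ j, E (ι j)) → ⨁ i, E i

/-- Multilinearity (in each slot, on homogeneous arguments). -/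
def IsMultilin (F : RawForm E) : Prop :=
  ∀ (n : ℕ) (ι : Fin n → ℤ) (x : ∀ j, E (ι j)) (j : Fin n) (a b : E (ι j)) (c : 𝕜),
    F n ι (Function.update x j (a + b)) =
        F n ι (Function.update x j a) + F n ι (Function.update x j b) ∧
      F n ι (Function.update x j (c • a)) = c • F n ι (Function.update x j a)

/-- Graded symmetry: swapping two adjacent homogeneous arguments multiplies the value
by the Koszul sign `(-1)^{|X||Y|}`. -/
def IsGradedSym (F : RawForm E) : Prop :=
  ∀ (n : ℕ) (ι : Fin n → ℤ) (x : ∀ j, E (ι j)) (p q : Fin n), (p : ℕ) + 1 = (q : ℕ) →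
    F n (fun j => ι (Equiv.swap p q j)) (fun j => x (Equiv.swap p q j)) =
      ((-1 : 𝕜) ^ (ι p * ι q)) • F n ι x

/-- `F` has degree `d`: its value on homogeneous arguments of degrees `ι` is homogeneous
of degree `(∑ j, ι j) + d`. -/
def IsOfDeg (d : ℤ) (F : RawForm E) : Prop :=
  ∀ (n : ℕ) (ι : Fin n → ℤ) (x : ∀ j, E (ι j)) (m : ℤ),
    m ≠ (∑ j, ι j) + d → F n ι x m = 0

/-- Symmetric vector valued form of degree `d`. -/
def IsSVF (d : ℤ) (F : RawForm E) : Prop :=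
  IsMultilin 𝕜 E F ∧ IsGradedSym 𝕜 E F ∧ IsOfDeg E d F

/-- `F` is (concentrated in) a `k`-form. -/
def IsArity (k : ℕ) (F : RawForm E) : Prop :=
  ∀ n, n ≠ k → ∀ (ι : Fin n → ℤ) (x : ∀ j, E (ι j)), F n ι x = 0

/-- `F` has no 0-form (curvature) component. -/
def NoCurv (F : RawForm E) : Prop :=
  ∀ (ι : Fin 0 → ℤ) (x : ∀ j, E (ι j)), F 0 ι x = 0

/-- `(k, n-k)`-shuffles of `Fin n`. -/
def IsShuffle (k : ℕ) {n : ℕ} (σ : Equiv.Perm (Fin n)) : Prop :=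
  ∀ i j : Fin n, i < j → ((j : ℕ) < k ∨ k ≤ (i : ℕ)) → σ i < σ j

/-- The Koszul sign of the rearrangement `(X_{σ(1)},…,X_{σ(n)})` of homogeneous elements
of degrees `ι`. -/
def koszulSign {n : ℕ} (ι : Fin n → ℤ) (σ : Equiv.Perm (Fin n)) : 𝕜 :=
  ∏ p ∈ Finset.univ.filter (fun p : Fin n × Fin n => p.1 < p.2 ∧ σ p.2 < σ p.1),
    (-1 : 𝕜) ^ (ι (σ p.1) * ι (σ p.2))

/-- Prepend a degree to a vector of degrees. -/
def dcons {n : ℕ} (m : ℤ) (rest : Fin n → ℤ) : Fin (n + 1) → ℤ :=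
  fun j => if h : (j : ℕ) = 0 then m else rest ⟨(j : ℕ) - 1, by have := j.isLt; omega⟩

/-- Prepend a homogeneous element to a tuple of homogeneous elements. -/
def dconsV {n : ℕ} {m : ℤ} {rest : Fin n → ℤ} (v : E m) (xs : ∀ i, E (rest i)) :
    ∀ j : Fin (n + 1), E (dcons m rest j) := fun j => by
  unfold dcons
  by_cases h : (j : ℕ) = 0
  · rw [dif_pos h]; exact v
  · rw [dif_neg h]; exact xs ⟨(j : ℕ) - 1, by have := j.isLt; omega⟩

/-- The insertion operator `ι_F G`, summing over shuffles with Koszul signs. -/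
def ins (F G : RawForm E) : RawForm E :=
  fun n ι x =>
    ∑ k : Fin (n + 1),
      ∑ σ ∈ Finset.univ.filter (fun σ : Equiv.Perm (Fin n) => IsShuffle (k : ℕ) σ),
        koszulSign 𝕜 ι σ •
          DFinsupp.sum
            (F (k : ℕ)
              (fun i => ι (σ ⟨(i : ℕ), by have h1 := i.isLt; have h2 := k.isLt; omega⟩))
              (fun i => x (σ ⟨(i : ℕ), by have h1 := i.isLt; have h2 := k.isLt; omega⟩)))
            (fun m v =>
              G (n - (k : ℕ) + 1)
                (dcons m
                  (fun i => ι (σ ⟨(k : ℕ) + (i : ℕ), by have h1 := i.isLt; have h2 := k.isLt; omega⟩)))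
                (dconsV E v
                  (fun i => x (σ ⟨(k : ℕ) + (i : ℕ), by have h1 := i.isLt; have h2 := k.isLt; omega⟩))))

/-- The Richardson–Nijenhuis bracket `[F,G]_RN = ι_F G - (-1)^{dK·dL} ι_G F` of forms
of degrees `dK` and `dL`. -/
def rnb (dK dL : ℤ) (F G : RawForm E) : RawForm E :=
  fun n ι x => ins 𝕜 E F G n ι x - ((-1 : 𝕜) ^ (dK * dL)) • ins 𝕜 E G F n ι x

/-- An element of the graded vector space, regarded as a vector valued 0-form. -/
def ofElem (v : ⨁ i, E i) : RawForm E := fun n _ _ => if n = 0 then v else 0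

/-- The Euler map `S(X) = -|X|·X`, a vector valued 1-form of degree 0. -/
def euler : RawForm E :=
  fun n ι x =>
    if h : n = 1 then
      (-(ι ⟨0, by omega⟩)) • DirectSum.of E (ι ⟨0, by omega⟩) (x ⟨0, by omega⟩)
    else 0

/-- The identity map of `E`, regarded as a vector valued 1-form of degree 0. -/
def idF : RawForm E :=
  fun n ι x =>
    if h : n = 1 then DirectSum.of E (ι ⟨0, by omega⟩) (x ⟨0, by omega⟩) else 0

/-- The arity-`k` component of a vector valued form. -/
def comp (F : RawForm E) (k : ℕ) : RawForm E :=
  fun n ι x => if n = k then F n ι x else 0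

end Core

/-- A linear map `∂ : E_{-2} → E_{-1}` regarded as a symmetric vector valued 1-form of
degree `+1` on the graded vector space `E` (concentrated in degrees `-2, -1`). -/
def delF (𝕜 : Type) [Field 𝕜] [CharZero 𝕜]
    (E : ℤ → Type) [∀ i, AddCommGroup (E i)] [∀ i, Module 𝕜 (E i)]
    (pd : E (-2) →ₗ[𝕜] E (-1)) : RawForm E :=
  fun n ι x =>
    if h : n = 1 then
      if h0 : ι ⟨0, by omega⟩ = -2 then
        DirectSum.of E (-1) (pd (cast (congrArg E h0) (x ⟨0, by omega⟩)))
      else 0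
    else 0

/-- A skew-symmetric bilinear map `α : E_{-1} × E_{-1} → E_{-2}` regarded as a symmetric
vector valued 2-form of degree 0 on the graded vector space `E`. -/
def alF (𝕜 : Type) [Field 𝕜] [CharZero 𝕜]
    (E : ℤ → Type) [∀ i, AddCommGroup (E i)] [∀ i, Module 𝕜 (E i)]
    (a : E (-1) →ₗ[𝕜] E (-1) →ₗ[𝕜] E (-2)) : RawForm E :=
  fun n ι x =>
    if h : n = 2 then
      if h0 : ι ⟨0, by omega⟩ = -1 then
        if h1 : ι ⟨1, by omega⟩ = -1 then
          DirectSum.of E (-2)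
            (a (cast (congrArg E h0) (x ⟨0, by omega⟩))
              (cast (congrArg E h1) (x ⟨1, by omega⟩)))
        else 0
      else 0
    else 0


/-!
Everything reduces to a finite computation with the insertion operator. Since `E` lives in
degrees `-2` and `-1`, the form `∂` lives in arity one and only sees degree `-2`, while
`𝒩 = S + α` lives in arities one and two, so in each bracket only a handful of shuffle terms
survive. One finds `[𝒩,∂](X,Y) = ∂α(X,Y)`, `[𝒩,∂](f,Y) = -α(∂f,Y)` and
`[𝒩,[𝒩,∂]](X,Y,Z) = -2 (α(∂α(X,Y),Z) - α(∂α(X,Z),Y) + α(∂α(Y,Z),X))`. Bracketing once more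
with `∂` and evaluating on `(X,Y,Z)` and on `(X,Y,f)` gives `-2` times expressions which, by
skew-symmetry of `α`, are the Jacobiator of `∂ ∘ α` and the defect of the representation
identity; in characteristic zero both therefore vanish.
-/

section Insertion

variable {𝕜 : Type} [Field 𝕜] {E : ℤ → Type} [∀ i, AddCommGroup (E i)] [∀ i, Module 𝕜 (E i)]

def VanishesAt (F : RawForm E) (n : ℕ) : Prop := ∀ ι x, F n ι x = 0

variable (𝕜) in
def insTerm (F G : RawForm E) {n : ℕ} (ι : Fin n → ℤ) (x : ∀ j, E (ι j)) (k : Fin (n + 1))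
    (σ : Equiv.Perm (Fin n)) : ⨁ i, E i :=
  koszulSign 𝕜 ι σ •
    DFinsupp.sum (F k (fun i => ι (σ ⟨i, by omega⟩)) (fun i => x (σ ⟨i, by omega⟩)))
      (fun m v => G (n - k + 1) (dcons m (fun i => ι (σ ⟨k + i, by omega⟩)))
        (dconsV E v (fun i => x (σ ⟨k + i, by omega⟩))))

lemma ins_eq_sum_insTerm (F G : RawForm E) (n : ℕ) (ι : Fin n → ℤ) (x : ∀ j, E (ι j)) :
    ins 𝕜 E F G n ι x =
      ∑ k : Fin (n + 1), ∑ σ ∈ Finset.univ.filter (fun σ => IsShuffle (k : ℕ) σ),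
        insTerm 𝕜 F G ι x k σ :=
  rfl

/-- Stated for an arbitrary decidability instance: `ins` filters with the classical one. -/
lemma filter_univ_eq_of_forall_iff {α : Type} [Fintype α] [DecidableEq α] (p : α → Prop)
    {inst : DecidablePred p} (S : Finset α) (h : ∀ x, p x ↔ x ∈ S) :
    @Finset.filter _ p inst Finset.univ = S := by
  ext y; simp [h]

open Equiv in
lemma shuffles_fin_two (k : Fin 3) :
    Finset.univ.filter (fun σ : Perm (Fin 2) => IsShuffle (k : ℕ) σ) =
      if k = 1 then {1, swap 0 1} else {1} := by
  refine filter_univ_eq_of_forall_iff _ _ ?_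
  unfold IsShuffle; revert k; decide

open Equiv in
lemma shuffles_fin_three (k : Fin 4) :
    Finset.univ.filter (fun σ : Perm (Fin 3) => IsShuffle (k : ℕ) σ) =
      if k = 1 then {1, swap 0 1, swap 1 2 * swap 0 1}
      else if k = 2 then {1, swap 1 2, swap 0 1 * swap 1 2} else {1} := by
  refine filter_univ_eq_of_forall_iff _ _ ?_
  unfold IsShuffle; revert k; decide

open Equiv in
lemma ins_fin_two (F G : RawForm E) (ι : Fin 2 → ℤ) (x : ∀ j, E (ι j)) :
    ins 𝕜 E F G 2 ι x =
      insTerm 𝕜 F G ι x 0 1 + (insTerm 𝕜 F G ι x 1 1 + insTerm 𝕜 F G ι x 1 (swap 0 1)) +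
        insTerm 𝕜 F G ι x 2 1 := by
  simp (disch := decide) [ins_eq_sum_insTerm, Fin.sum_univ_three, shuffles_fin_two]

open Equiv in
lemma ins_fin_three (F G : RawForm E) (ι : Fin 3 → ℤ) (x : ∀ j, E (ι j)) :
    ins 𝕜 E F G 3 ι x =
      insTerm 𝕜 F G ι x 0 1 +
        (insTerm 𝕜 F G ι x 1 1 + insTerm 𝕜 F G ι x 1 (swap 0 1) +
          insTerm 𝕜 F G ι x 1 (swap 1 2 * swap 0 1)) +
        (insTerm 𝕜 F G ι x 2 1 + insTerm 𝕜 F G ι x 2 (swap 1 2) +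
          insTerm 𝕜 F G ι x 2 (swap 0 1 * swap 1 2)) +
        insTerm 𝕜 F G ι x 3 1 := by
  simp (disch := decide) [ins_eq_sum_insTerm, Fin.sum_univ_four, shuffles_fin_three,
    Finset.sum_insert, add_assoc]

section InsTerm

variable {F G : RawForm E} {n : ℕ} {ι : Fin n → ℤ} {x : ∀ j, E (ι j)}

lemma insTerm_eq_zero_of_left {k : Fin (n + 1)} {σ : Equiv.Perm (Fin n)}
    (h : F k (fun i => ι (σ ⟨i, by omega⟩)) (fun i => x (σ ⟨i, by omega⟩)) = 0) :
    insTerm 𝕜 F G ι x k σ = 0 := by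
  simp only [insTerm, h, DFinsupp.sum_zero_index, smul_zero]

lemma insTerm_eq_zero_of_right {k : Fin (n + 1)} (h : VanishesAt G (n - k + 1))
    (σ : Equiv.Perm (Fin n)) : insTerm 𝕜 F G ι x k σ = 0 := by
  simp only [insTerm, h _ _, DFinsupp.sum_zero, smul_zero]

lemma insTerm_eq_of_left_eq_of {k : Fin (n + 1)} {σ : Equiv.Perm (Fin n)} {m : ℤ} {v : E m}
    (hF : F k (fun i => ι (σ ⟨i, by omega⟩)) (fun i => x (σ ⟨i, by omega⟩)) =
      DirectSum.of E m v)
    (hG : G (n - k + 1) (dcons m (fun i => ι (σ ⟨k + i, by omega⟩)))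
      (dconsV E 0 (fun i => x (σ ⟨k + i, by omega⟩))) = 0) :
    insTerm 𝕜 F G ι x k σ =
      koszulSign 𝕜 ι σ • G (n - k + 1) (dcons m (fun i => ι (σ ⟨k + i, by omega⟩)))
        (dconsV E v (fun i => x (σ ⟨k + i, by omega⟩))) := by
  rw [insTerm, hF]
  exact congrArg _ (DFinsupp.sum_single_index hG)

lemma insTerm_eq_zero_of_isArity_left {j : ℕ} (hF : IsArity E j F) {k : Fin (n + 1)}
    (hk : (k : ℕ) ≠ j) (σ : Equiv.Perm (Fin n)) : insTerm 𝕜 F G ι x k σ = 0 :=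
  insTerm_eq_zero_of_left (hF k hk _ _)

lemma insTerm_eq_zero_of_isArity_right {j : ℕ} (hG : IsArity E j G) {k : Fin (n + 1)}
    (hk : n - k + 1 ≠ j) (σ : Equiv.Perm (Fin n)) : insTerm 𝕜 F G ι x k σ = 0 :=
  insTerm_eq_zero_of_right (hG _ hk) σ

end InsTerm

section Arity

variable {F G : RawForm E} {n : ℕ}

lemma ins_vanishesAt (h : ∀ k ≤ n, VanishesAt F k ∨ VanishesAt G (n - k + 1)) :
    VanishesAt (ins 𝕜 E F G) n := fun ι x => by
  rw [ins_eq_sum_insTerm]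
  refine Finset.sum_eq_zero fun k _ => Finset.sum_eq_zero fun σ _ => ?_
  rcases h k (by omega) with hF | hG
  · exact insTerm_eq_zero_of_left (hF _ _)
  · exact insTerm_eq_zero_of_right hG σ

lemma ins_vanishesAt_zero (h : VanishesAt F 0) : VanishesAt (ins 𝕜 E F G) 0 :=
  ins_vanishesAt fun k hk => .inl (by rwa [Nat.le_zero.mp hk])

lemma ins_vanishesAt_of_support (s t : Finset ℕ) (hF : ∀ k ∉ s, VanishesAt F k)
    (hG : ∀ l ∉ t, VanishesAt G l) (h : ∀ k ∈ s, ∀ l ∈ t, k + l ≠ n + 1) :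
    VanishesAt (ins 𝕜 E F G) n := by
  refine ins_vanishesAt fun k hk => ?_
  by_cases hs : k ∈ s
  · exact .inr (hG _ fun ht => h k hs _ ht (by omega))
  · exact .inl (hF k hs)

lemma rnb_vanishesAt {dK dL : ℤ} (hFG : VanishesAt (ins 𝕜 E F G) n)
    (hGF : VanishesAt (ins 𝕜 E G F) n) : VanishesAt (rnb 𝕜 E dK dL F G) n := fun ι x => by
  rw [rnb, hFG, hGF, smul_zero, sub_zero]

open Equiv

variable {ι2 : Fin 2 → ℤ} {x2 : ∀ j, E (ι2 j)} {ι3 : Fin 3 → ℤ} {x3 : ∀ j, E (ι3 j)}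

lemma ins_fin_two_of_isArity_one_left (hF : IsArity E 1 F) :
    ins 𝕜 E F G 2 ι2 x2 = insTerm 𝕜 F G ι2 x2 1 1 + insTerm 𝕜 F G ι2 x2 1 (swap 0 1) := by
  rw [ins_fin_two]
  simp (disch := decide) only [insTerm_eq_zero_of_isArity_left hF, zero_add, add_zero]

lemma ins_fin_two_of_isArity_one_right (hF : VanishesAt F 0) (hG : IsArity E 1 G) :
    ins 𝕜 E F G 2 ι2 x2 = insTerm 𝕜 F G ι2 x2 2 1 := by
  rw [ins_fin_two, insTerm_eq_zero_of_left (hF _ _)]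
  simp (disch := decide) only [insTerm_eq_zero_of_isArity_right hG, zero_add]

lemma ins_fin_three_of_isArity_one_left (hF : IsArity E 1 F) :
    ins 𝕜 E F G 3 ι3 x3 = insTerm 𝕜 F G ι3 x3 1 1 + insTerm 𝕜 F G ι3 x3 1 (swap 0 1) +
      insTerm 𝕜 F G ι3 x3 1 (swap 1 2 * swap 0 1) := by
  rw [ins_fin_three]
  simp (disch := decide) only [insTerm_eq_zero_of_isArity_left hF, zero_add, add_zero]

lemma ins_fin_three_of_isArity_one_right (hF : VanishesAt F 0) (hG : IsArity E 1 G) :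
    ins 𝕜 E F G 3 ι3 x3 = insTerm 𝕜 F G ι3 x3 3 1 := by
  rw [ins_fin_three, insTerm_eq_zero_of_left (hF _ _)]
  simp (disch := decide) only [insTerm_eq_zero_of_isArity_right hG, zero_add]

lemma ins_fin_three_of_vanishesAt (hF0 : VanishesAt F 0) (hF3 : VanishesAt F 3)
    (hG : VanishesAt G 3) :
    ins 𝕜 E F G 3 ι3 x3 = insTerm 𝕜 F G ι3 x3 2 1 + insTerm 𝕜 F G ι3 x3 2 (swap 1 2) +
      insTerm 𝕜 F G ι3 x3 2 (swap 0 1 * swap 1 2) := by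
  rw [ins_fin_three, insTerm_eq_zero_of_left (k := 0) (hF0 _ _),
    insTerm_eq_zero_of_left (k := 3) (hF3 _ _), insTerm_eq_zero_of_right (k := 1) hG,
    insTerm_eq_zero_of_right (k := 1) hG, insTerm_eq_zero_of_right (k := 1) hG]
  simp only [zero_add, add_zero]

end Arity

lemma rnb_zero_one_apply (F G : RawForm E) (n : ℕ) (ι : Fin n → ℤ) (x : ∀ j, E (ι j)) :
    rnb 𝕜 E 0 1 F G n ι x = ins 𝕜 E F G n ι x - ins 𝕜 E G F n ι x := by
  rw [rnb, zero_mul, zpow_zero, one_smul]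

lemma rnb_one_one_apply (F G : RawForm E) (n : ℕ) (ι : Fin n → ℤ) (x : ∀ j, E (ι j)) :
    rnb 𝕜 E 1 1 F G n ι x = ins 𝕜 E F G n ι x + ins 𝕜 E G F n ι x := by
  rw [rnb, one_mul, zpow_one, neg_one_smul, sub_neg_eq_add]

end Insertion

section Signs

variable {𝕜 : Type} [Field 𝕜]
open Equiv

lemma koszulSign_one {n : ℕ} (ι : Fin n → ℤ) : koszulSign 𝕜 ι 1 = 1 := by
  rw [koszulSign, filter_univ_eq_of_forall_iff _ ∅ fun p => by
    simpa using fun h : p.1 < p.2 => lt_asymm h, Finset.prod_empty]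

lemma koszulSign_fin_two_swap (ι : Fin 2 → ℤ) :
    koszulSign 𝕜 ι (swap 0 1) = (-1) ^ (ι 1 * ι 0) := by
  rw [koszulSign, filter_univ_eq_of_forall_iff _ {(0, 1)} (by decide), Finset.prod_singleton]
  rfl

lemma koszulSign_swap_one_two (ι : Fin 3 → ℤ) :
    koszulSign 𝕜 ι (swap 1 2) = (-1) ^ (ι 2 * ι 1) := by
  rw [koszulSign, filter_univ_eq_of_forall_iff _ {(1, 2)} (by decide), Finset.prod_singleton]
  rfl

lemma koszulSign_swap_zero_one_mul_swap_one_two (ι : Fin 3 → ℤ) :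
    koszulSign 𝕜 ι (swap 0 1 * swap 1 2) = (-1) ^ (ι 1 * ι 0) * (-1) ^ (ι 2 * ι 0) := by
  rw [koszulSign, filter_univ_eq_of_forall_iff _ {(0, 2), (1, 2)} (by decide),
    Finset.prod_pair (by decide)]
  rfl

lemma koszulSign_swap_one_two_mul_swap_zero_one (ι : Fin 3 → ℤ) :
    koszulSign 𝕜 ι (swap 1 2 * swap 0 1) = (-1) ^ (ι 2 * ι 0) * (-1) ^ (ι 2 * ι 1) := by
  rw [koszulSign, filter_univ_eq_of_forall_iff _ {(0, 1), (0, 2)} (by decide),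
    Finset.prod_pair (by decide)]
  rfl

end Signs

section Casts

variable {E : ℤ → Type} [∀ i, AddCommGroup (E i)]

lemma apply_eq_apply_cast (F : RawForm E) {n : ℕ} {ι ι' : Fin n → ℤ} (h : ι = ι')
    (x : ∀ j, E (ι j)) : F n ι x = F n ι' (fun j => cast (congrArg E (congrFun h j)) (x j)) := by
  subst h; rfl

lemma cast_eq_zero {i j : ℤ} (h : i = j) : cast (congrArg E h) (0 : E i) = 0 := by
  subst h; rfl

end Casts

section Forms

variable {𝕜 : Type} [Field 𝕜] [CharZero 𝕜] {E : ℤ → Type} [∀ i, AddCommGroup (E i)]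
  [∀ i, Module 𝕜 (E i)] (pd : E (-2) →ₗ[𝕜] E (-1)) (a : E (-1) →ₗ[𝕜] E (-1) →ₗ[𝕜] E (-2))

lemma delF_isArity : IsArity E 1 (delF 𝕜 E pd) :=
  fun _ hn _ _ => dif_neg hn

/- The value lemmas take an arbitrary arity `n` with `hn : n = 1` (or `2`, `3`) because inside
`ins` the arity of the outer form appears as `n - k + 1`, which is not syntactically a numeral. -/
lemma delF_apply_of_eq {n : ℕ} (hn : n = 1) {ι : Fin n → ℤ} (h : ι ⟨0, by omega⟩ = -2)
    (x : ∀ j, E (ι j)) :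
    delF 𝕜 E pd n ι x = DirectSum.of E (-1) (pd (cast (congrArg E h) (x ⟨0, by omega⟩))) := by
  rw [delF, dif_pos hn, dif_pos h]

lemma delF_apply_of_ne {n : ℕ} (hn : n = 1) {ι : Fin n → ℤ} (h : ι ⟨0, by omega⟩ ≠ -2)
    (x : ∀ j, E (ι j)) : delF 𝕜 E pd n ι x = 0 := by
  rw [delF, dif_pos hn, dif_neg h]

lemma delF_dconsV_zero {n : ℕ} {m : ℤ} {rest : Fin n → ℤ} (xs : ∀ i, E (rest i)) :
    delF 𝕜 E pd (n + 1) (dcons m rest) (dconsV E 0 xs) = 0 := by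
  rw [delF]
  split_ifs with _ h
  · change DirectSum.of E (-1) (pd (cast (congrArg E h) 0)) = 0
    rw [cast_eq_zero h, map_zero, map_zero]
  all_goals rfl

variable (𝕜 E) in
def nijF : RawForm E := euler E + alF 𝕜 E a

lemma nijF_apply (n : ℕ) (ι : Fin n → ℤ) (x : ∀ j, E (ι j)) :
    nijF 𝕜 E a n ι x = euler E n ι x + alF 𝕜 E a n ι x :=
  rfl

lemma nijF_vanishesAt {n : ℕ} (h1 : n ≠ 1) (h2 : n ≠ 2) : VanishesAt (nijF 𝕜 E a) n :=
  fun _ _ => by rw [nijF_apply, euler, alF, dif_neg h1, dif_neg h2, add_zero]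

lemma nijF_apply_of_eq {n : ℕ} (hn : n = 2) {ι : Fin n → ℤ} (h0 : ι ⟨0, by omega⟩ = -1)
    (h1 : ι ⟨1, by omega⟩ = -1) (x : ∀ j, E (ι j)) :
    nijF 𝕜 E a n ι x = DirectSum.of E (-2)
      (a (cast (congrArg E h0) (x ⟨0, by omega⟩)) (cast (congrArg E h1) (x ⟨1, by omega⟩))) := by
  rw [nijF_apply, euler, alF, dif_neg (by omega), zero_add, dif_pos hn, dif_pos h0, dif_pos h1]

lemma nijF_apply_of_left_ne {n : ℕ} (hn : n = 2) {ι : Fin n → ℤ} (h : ι ⟨0, by omega⟩ ≠ -1)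
    (x : ∀ j, E (ι j)) : nijF 𝕜 E a n ι x = 0 := by
  rw [nijF_apply, euler, alF, dif_neg (by omega), zero_add, dif_pos hn, dif_neg h]

lemma nijF_apply_of_right_ne {n : ℕ} (hn : n = 2) {ι : Fin n → ℤ} (h : ι ⟨1, by omega⟩ ≠ -1)
    (x : ∀ j, E (ι j)) : nijF 𝕜 E a n ι x = 0 := by
  rw [nijF_apply, euler, alF, dif_neg (by omega), zero_add, dif_pos hn]
  split_ifs <;> trivial

lemma nijF_dconsV_zero {n : ℕ} {m : ℤ} {rest : Fin n → ℤ} (xs : ∀ i, E (rest i)) :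
    nijF 𝕜 E a (n + 1) (dcons m rest) (dconsV E 0 xs) = 0 := by
  have hS : euler E (n + 1) (dcons m rest) (dconsV E 0 xs) = 0 := by
    rw [euler]
    split_ifs
    · exact (congrArg _ (map_zero (DirectSum.of E _))).trans (smul_zero _)
    · rfl
  have hα : alF 𝕜 E a (n + 1) (dcons m rest) (dconsV E 0 xs) = 0 := by
    rw [alF]
    split_ifs with _ h0
    · change DirectSum.of E (-2) (a (cast (congrArg E h0) 0) _) = 0
      rw [cast_eq_zero h0, map_zero, LinearMap.zero_apply, map_zero]
    all_goals rfl
  rw [nijF_apply, hS, hα, add_zero]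

end Forms

section Brackets

variable {𝕜 : Type} [Field 𝕜] [CharZero 𝕜] {E : ℤ → Type} [∀ i, AddCommGroup (E i)]
  [∀ i, Module 𝕜 (E i)] (pd : E (-2) →ₗ[𝕜] E (-1)) (a : E (-1) →ₗ[𝕜] E (-1) →ₗ[𝕜] E (-2))

def nijDel : RawForm E := rnb 𝕜 E 0 1 (nijF 𝕜 E a) (delF 𝕜 E pd)

lemma nijDel_vanishesAt {n : ℕ} (hn : n = 0 ∨ n = 3) : VanishesAt (nijDel pd a) n := by
  have hN : ∀ k ∉ ({1, 2} : Finset ℕ), VanishesAt (nijF 𝕜 E a) k := fun k hk =>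
    nijF_vanishesAt a (by simp_all) (by simp_all)
  have hD : ∀ k ∉ ({1} : Finset ℕ), VanishesAt (delF 𝕜 E pd) k := fun k hk =>
    delF_isArity pd k (by simpa using hk)
  exact rnb_vanishesAt
    (ins_vanishesAt_of_support _ _ hN hD (by rcases hn with rfl | rfl <;> decide))
    (ins_vanishesAt_of_support _ _ hD hN (by rcases hn with rfl | rfl <;> decide))

/- Each value lemma first transports `ι` to an explicit degree vector, so that the degrees of
the permuted arguments inside `ins` reduce to numerals by `rfl`. -/
lemma nijDel_apply_neg_one_neg_one {n : ℕ} (hn : n = 2) {ι : Fin n → ℤ}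
    (h0 : ι ⟨0, by omega⟩ = -1) (h1 : ι ⟨1, by omega⟩ = -1) (x : ∀ j, E (ι j)) :
    nijDel pd a n ι x = DirectSum.of E (-1) (pd
      (a (cast (congrArg E h0) (x ⟨0, by omega⟩)) (cast (congrArg E h1) (x ⟨1, by omega⟩)))) := by
  subst hn
  rw [apply_eq_apply_cast (nijDel pd a)
    (show ι = ![-1, -1] from funext fun j => by fin_cases j <;> assumption)]
  set y : ∀ j, E (![-1, -1] j) := fun j => cast _ (x j)
  have hND : ins 𝕜 E (nijF 𝕜 E a) (delF 𝕜 E pd) 2 ![-1, -1] y =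
      DirectSum.of E (-1) (pd (a (y 0) (y 1))) := by
    rw [ins_fin_two_of_isArity_one_right (nijF_vanishesAt a (by decide) (by decide))
        (delF_isArity pd),
      insTerm_eq_of_left_eq_of (nijF_apply_of_eq a (by rfl) (by rfl) (by rfl) _)
        (delF_dconsV_zero pd _),
      koszulSign_one, one_smul, delF_apply_of_eq pd (by rfl) (by rfl)]
    rfl
  have hDN : ins 𝕜 E (delF 𝕜 E pd) (nijF 𝕜 E a) 2 ![-1, -1] y = 0 := by
    rw [ins_fin_two_of_isArity_one_left (delF_isArity pd),
      insTerm_eq_zero_of_left (delF_apply_of_ne pd (by rfl) (by decide) _),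
      insTerm_eq_zero_of_left (delF_apply_of_ne pd (by rfl) (by decide) _), add_zero]
  rw [nijDel, rnb_zero_one_apply, hND, hDN, sub_zero]
  rfl

lemma nijDel_apply_neg_two_neg_one {n : ℕ} (hn : n = 2) {ι : Fin n → ℤ}
    (h0 : ι ⟨0, by omega⟩ = -2) (h1 : ι ⟨1, by omega⟩ = -1) (x : ∀ j, E (ι j)) :
    nijDel pd a n ι x = DirectSum.of E (-2)
      (-a (pd (cast (congrArg E h0) (x ⟨0, by omega⟩)))
        (cast (congrArg E h1) (x ⟨1, by omega⟩))) := by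
  subst hn
  rw [apply_eq_apply_cast (nijDel pd a)
    (show ι = ![-2, -1] from funext fun j => by fin_cases j <;> assumption)]
  set y : ∀ j, E (![-2, -1] j) := fun j => cast _ (x j)
  have hND : ins 𝕜 E (nijF 𝕜 E a) (delF 𝕜 E pd) 2 ![-2, -1] y = 0 := by
    rw [ins_fin_two_of_isArity_one_right (nijF_vanishesAt a (by decide) (by decide))
        (delF_isArity pd),
      insTerm_eq_zero_of_left (nijF_apply_of_left_ne a (by rfl) (by decide) _)]
  have hDN : ins 𝕜 E (delF 𝕜 E pd) (nijF 𝕜 E a) 2 ![-2, -1] y =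
      DirectSum.of E (-2) (a (pd (y 0)) (y 1)) := by
    rw [ins_fin_two_of_isArity_one_left (delF_isArity pd),
      insTerm_eq_of_left_eq_of (delF_apply_of_eq pd (by rfl) (by rfl) _) (nijF_dconsV_zero a _),
      insTerm_eq_zero_of_left (delF_apply_of_ne pd (by rfl) (by decide) _),
      koszulSign_one, one_smul, nijF_apply_of_eq a (by rfl) (by rfl) (by rfl), add_zero]
    rfl
  rw [nijDel, rnb_zero_one_apply, hND, hDN, zero_sub, ← map_neg]
  rfl

lemma nijDel_apply_neg_one_neg_two {n : ℕ} (hn : n = 2) {ι : Fin n → ℤ}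
    (h0 : ι ⟨0, by omega⟩ = -1) (h1 : ι ⟨1, by omega⟩ = -2) (x : ∀ j, E (ι j)) :
    nijDel pd a n ι x = DirectSum.of E (-2)
      (-a (pd (cast (congrArg E h1) (x ⟨1, by omega⟩)))
        (cast (congrArg E h0) (x ⟨0, by omega⟩))) := by
  subst hn
  rw [apply_eq_apply_cast (nijDel pd a)
    (show ι = ![-1, -2] from funext fun j => by fin_cases j <;> assumption)]
  set y : ∀ j, E (![-1, -2] j) := fun j => cast _ (x j)
  have hND : ins 𝕜 E (nijF 𝕜 E a) (delF 𝕜 E pd) 2 ![-1, -2] y = 0 := by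
    rw [ins_fin_two_of_isArity_one_right (nijF_vanishesAt a (by decide) (by decide))
        (delF_isArity pd),
      insTerm_eq_zero_of_left (nijF_apply_of_right_ne a (by rfl) (by decide) _)]
  have hDN : ins 𝕜 E (delF 𝕜 E pd) (nijF 𝕜 E a) 2 ![-1, -2] y =
      DirectSum.of E (-2) (a (pd (y 1)) (y 0)) := by
    rw [ins_fin_two_of_isArity_one_left (delF_isArity pd),
      insTerm_eq_zero_of_left (delF_apply_of_ne pd (by rfl) (by decide) _),
      insTerm_eq_of_left_eq_of (delF_apply_of_eq pd (by rfl) (by rfl) _) (nijF_dconsV_zero a _),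
      koszulSign_fin_two_swap, Even.neg_one_zpow (by decide), one_smul,
      nijF_apply_of_eq a (by rfl) (by rfl) (by rfl), zero_add]
    rfl
  rw [nijDel, rnb_zero_one_apply, hND, hDN, zero_sub, ← map_neg]
  rfl

lemma nijDel_apply_neg_two_neg_two {n : ℕ} (hn : n = 2) {ι : Fin n → ℤ}
    (h0 : ι ⟨0, by omega⟩ = -2) (h1 : ι ⟨1, by omega⟩ = -2) (x : ∀ j, E (ι j)) :
    nijDel pd a n ι x = 0 := by
  subst hn
  rw [apply_eq_apply_cast (nijDel pd a)
    (show ι = ![-2, -2] from funext fun j => by fin_cases j <;> assumption)]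
  set y : ∀ j, E (![-2, -2] j) := fun j => cast _ (x j)
  have hND : ins 𝕜 E (nijF 𝕜 E a) (delF 𝕜 E pd) 2 ![-2, -2] y = 0 := by
    rw [ins_fin_two_of_isArity_one_right (nijF_vanishesAt a (by decide) (by decide))
        (delF_isArity pd),
      insTerm_eq_zero_of_left (nijF_apply_of_left_ne a (by rfl) (by decide) _)]
  have hDN : ins 𝕜 E (delF 𝕜 E pd) (nijF 𝕜 E a) 2 ![-2, -2] y = 0 := by
    rw [ins_fin_two_of_isArity_one_left (delF_isArity pd),
      insTerm_eq_of_left_eq_of (delF_apply_of_eq pd (by rfl) (by rfl) _) (nijF_dconsV_zero a _),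
      insTerm_eq_of_left_eq_of (delF_apply_of_eq pd (by rfl) (by rfl) _) (nijF_dconsV_zero a _),
      nijF_apply_of_right_ne a (by rfl) (by decide), nijF_apply_of_right_ne a (by rfl) (by decide),
      smul_zero, smul_zero, add_zero]
  rw [nijDel, rnb_zero_one_apply, hND, hDN, sub_zero]

lemma nijDel_apply_neg_two_neg_one_of_eq_zero {n : ℕ} (hn : n = 2) {ι : Fin n → ℤ}
    (h0 : ι ⟨0, by omega⟩ = -2) (h1 : ι ⟨1, by omega⟩ = -1) (x : ∀ j, E (ι j))
    (hx : x ⟨0, by omega⟩ = 0) : nijDel pd a n ι x = 0 := by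
  rw [nijDel_apply_neg_two_neg_one pd a hn h0 h1, hx, cast_eq_zero h0]
  simp

end Brackets

section Brackets

variable {𝕜 : Type} [Field 𝕜] [CharZero 𝕜] {E : ℤ → Type} [∀ i, AddCommGroup (E i)]
  [∀ i, Module 𝕜 (E i)] (pd : E (-2) →ₗ[𝕜] E (-1)) (a : E (-1) →ₗ[𝕜] E (-1) →ₗ[𝕜] E (-2))

def nijNijDel : RawForm E := rnb 𝕜 E 0 1 (nijF 𝕜 E a) (nijDel pd a)

lemma nijNijDel_vanishesAt_zero : VanishesAt (nijNijDel pd a) 0 :=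
  rnb_vanishesAt (ins_vanishesAt_zero (nijF_vanishesAt a (by decide) (by decide)))
    (ins_vanishesAt_zero (nijDel_vanishesAt pd a (.inl rfl)))

lemma ins_nijF_nijDel_apply_neg_one_neg_one_neg_one (y : ∀ j, E (![-1, -1, -1] j)) :
    ins 𝕜 E (nijF 𝕜 E a) (nijDel pd a) 3 ![-1, -1, -1] y =
      DirectSum.of E (-2) (-a (pd (a (y 0) (y 1))) (y 2)) +
        -DirectSum.of E (-2) (-a (pd (a (y 0) (y 2))) (y 1)) +
        DirectSum.of E (-2) (-a (pd (a (y 1) (y 2))) (y 0)) := by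
  rw [ins_fin_three_of_vanishesAt (nijF_vanishesAt a (by decide) (by decide))
      (nijF_vanishesAt a (by decide) (by decide)) (nijDel_vanishesAt pd a (.inr rfl)),
    insTerm_eq_of_left_eq_of (nijF_apply_of_eq a (by rfl) (by rfl) (by rfl) _)
      (nijDel_apply_neg_two_neg_one_of_eq_zero pd a (by rfl) (by rfl) (by rfl) _ rfl),
    insTerm_eq_of_left_eq_of (nijF_apply_of_eq a (by rfl) (by rfl) (by rfl) _)
      (nijDel_apply_neg_two_neg_one_of_eq_zero pd a (by rfl) (by rfl) (by rfl) _ rfl),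
    insTerm_eq_of_left_eq_of (nijF_apply_of_eq a (by rfl) (by rfl) (by rfl) _)
      (nijDel_apply_neg_two_neg_one_of_eq_zero pd a (by rfl) (by rfl) (by rfl) _ rfl),
    koszulSign_one, koszulSign_swap_one_two, koszulSign_swap_zero_one_mul_swap_one_two,
    Odd.neg_one_zpow (by decide), Odd.neg_one_zpow (by decide), Odd.neg_one_zpow (by decide),
    neg_mul_neg, mul_one, one_smul, one_smul, neg_one_smul,
    nijDel_apply_neg_two_neg_one pd a (by rfl) (by rfl) (by rfl),
    nijDel_apply_neg_two_neg_one pd a (by rfl) (by rfl) (by rfl),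
    nijDel_apply_neg_two_neg_one pd a (by rfl) (by rfl) (by rfl)]
  rfl

lemma ins_nijDel_nijF_apply_neg_one_neg_one_neg_one (y : ∀ j, E (![-1, -1, -1] j)) :
    ins 𝕜 E (nijDel pd a) (nijF 𝕜 E a) 3 ![-1, -1, -1] y =
      DirectSum.of E (-2) (a (pd (a (y 0) (y 1))) (y 2)) +
        -DirectSum.of E (-2) (a (pd (a (y 0) (y 2))) (y 1)) +
        DirectSum.of E (-2) (a (pd (a (y 1) (y 2))) (y 0)) := by
  rw [ins_fin_three_of_vanishesAt (nijDel_vanishesAt pd a (.inl rfl))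
      (nijDel_vanishesAt pd a (.inr rfl)) (nijF_vanishesAt a (by decide) (by decide)),
    insTerm_eq_of_left_eq_of (nijDel_apply_neg_one_neg_one pd a (by rfl) (by rfl) (by rfl) _)
      (nijF_dconsV_zero a _),
    insTerm_eq_of_left_eq_of (nijDel_apply_neg_one_neg_one pd a (by rfl) (by rfl) (by rfl) _)
      (nijF_dconsV_zero a _),
    insTerm_eq_of_left_eq_of (nijDel_apply_neg_one_neg_one pd a (by rfl) (by rfl) (by rfl) _)
      (nijF_dconsV_zero a _),
    koszulSign_one, koszulSign_swap_one_two, koszulSign_swap_zero_one_mul_swap_one_two,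
    Odd.neg_one_zpow (by decide), Odd.neg_one_zpow (by decide), Odd.neg_one_zpow (by decide),
    neg_mul_neg, mul_one, one_smul, one_smul, neg_one_smul,
    nijF_apply_of_eq a (by rfl) (by rfl) (by rfl), nijF_apply_of_eq a (by rfl) (by rfl) (by rfl),
    nijF_apply_of_eq a (by rfl) (by rfl) (by rfl)]
  rfl

lemma nijNijDel_apply_neg_one_neg_one_neg_one {n : ℕ} (hn : n = 3) {ι : Fin n → ℤ}
    (h0 : ι ⟨0, by omega⟩ = -1) (h1 : ι ⟨1, by omega⟩ = -1) (h2 : ι ⟨2, by omega⟩ = -1)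
    (x : ∀ j, E (ι j)) :
    nijNijDel pd a n ι x = DirectSum.of E (-2) ((-2 : 𝕜) •
      (a (pd (a (cast (congrArg E h0) (x ⟨0, by omega⟩)) (cast (congrArg E h1) (x ⟨1, by omega⟩))))
          (cast (congrArg E h2) (x ⟨2, by omega⟩)) -
        a (pd (a (cast (congrArg E h0) (x ⟨0, by omega⟩)) (cast (congrArg E h2) (x ⟨2, by omega⟩))))
          (cast (congrArg E h1) (x ⟨1, by omega⟩)) +
        a (pd (a (cast (congrArg E h1) (x ⟨1, by omega⟩)) (cast (congrArg E h2) (x ⟨2, by omega⟩))))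
          (cast (congrArg E h0) (x ⟨0, by omega⟩)))) := by
  subst hn
  rw [apply_eq_apply_cast (nijNijDel pd a)
    (show ι = ![-1, -1, -1] from funext fun j => by fin_cases j <;> assumption)]
  set y : ∀ j, E (![-1, -1, -1] j) := fun j => cast _ (x j)
  calc nijNijDel pd a 3 ![-1, -1, -1] y
      = ins 𝕜 E (nijF 𝕜 E a) (nijDel pd a) 3 ![-1, -1, -1] y -
          ins 𝕜 E (nijDel pd a) (nijF 𝕜 E a) 3 ![-1, -1, -1] y := rnb_zero_one_apply ..
    _ = DirectSum.of E (-2) ((-2 : 𝕜) • (a (pd (a (y 0) (y 1))) (y 2) -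
          a (pd (a (y 0) (y 2))) (y 1) + a (pd (a (y 1) (y 2))) (y 0))) := by
      rw [ins_nijF_nijDel_apply_neg_one_neg_one_neg_one,
        ins_nijDel_nijF_apply_neg_one_neg_one_neg_one]
      simp only [← map_neg, ← map_add, ← map_sub]
      congr 1
      module

lemma nijNijDel_apply_neg_one_neg_one_neg_one_of_eq_zero {n : ℕ} (hn : n = 3) {ι : Fin n → ℤ}
    (h0 : ι ⟨0, by omega⟩ = -1) (h1 : ι ⟨1, by omega⟩ = -1) (h2 : ι ⟨2, by omega⟩ = -1)
    (x : ∀ j, E (ι j)) (hx : x ⟨0, by omega⟩ = 0) : nijNijDel pd a n ι x = 0 := by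
  rw [nijNijDel_apply_neg_one_neg_one_neg_one pd a hn h0 h1 h2, hx, cast_eq_zero h0]
  simp

lemma nijNijDel_apply_neg_one_neg_one_neg_two {n : ℕ} (hn : n = 3) {ι : Fin n → ℤ}
    (h0 : ι ⟨0, by omega⟩ = -1) (h1 : ι ⟨1, by omega⟩ = -1) (h2 : ι ⟨2, by omega⟩ = -2)
    (x : ∀ j, E (ι j)) : nijNijDel pd a n ι x = 0 := by
  subst hn
  rw [apply_eq_apply_cast (nijNijDel pd a)
    (show ι = ![-1, -1, -2] from funext fun j => by fin_cases j <;> assumption)]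
  set y : ∀ j, E (![-1, -1, -2] j) := fun j => cast _ (x j)
  have hNP : ins 𝕜 E (nijF 𝕜 E a) (nijDel pd a) 3 ![-1, -1, -2] y = 0 := by
    rw [ins_fin_three_of_vanishesAt (nijF_vanishesAt a (by decide) (by decide))
        (nijF_vanishesAt a (by decide) (by decide)) (nijDel_vanishesAt pd a (.inr rfl)),
      insTerm_eq_of_left_eq_of (nijF_apply_of_eq a (by rfl) (by rfl) (by rfl) _)
        (nijDel_apply_neg_two_neg_two pd a (by rfl) (by rfl) (by rfl) _),
      insTerm_eq_zero_of_left (nijF_apply_of_right_ne a (by rfl) (by decide) _),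
      insTerm_eq_zero_of_left (nijF_apply_of_right_ne a (by rfl) (by decide) _),
      nijDel_apply_neg_two_neg_two pd a (by rfl) (by rfl) (by rfl), smul_zero, add_zero,
      add_zero]
  have hPN : ins 𝕜 E (nijDel pd a) (nijF 𝕜 E a) 3 ![-1, -1, -2] y = 0 := by
    rw [ins_fin_three_of_vanishesAt (nijDel_vanishesAt pd a (.inl rfl))
        (nijDel_vanishesAt pd a (.inr rfl)) (nijF_vanishesAt a (by decide) (by decide)),
      insTerm_eq_of_left_eq_of (nijDel_apply_neg_one_neg_one pd a (by rfl) (by rfl) (by rfl) _)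
        (nijF_dconsV_zero a _),
      insTerm_eq_of_left_eq_of
        (nijDel_apply_neg_one_neg_two pd a (by rfl) (by rfl) (by rfl) _) (nijF_dconsV_zero a _),
      insTerm_eq_of_left_eq_of
        (nijDel_apply_neg_one_neg_two pd a (by rfl) (by rfl) (by rfl) _) (nijF_dconsV_zero a _),
      nijF_apply_of_right_ne a (by rfl) (by decide), nijF_apply_of_left_ne a (by rfl) (by decide),
      nijF_apply_of_left_ne a (by rfl) (by decide)]
    simp only [smul_zero, add_zero]
  rw [nijNijDel, rnb_zero_one_apply, hNP, hPN, sub_zero]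

def delNijNijDel : RawForm E := rnb 𝕜 E 1 1 (delF 𝕜 E pd) (nijNijDel pd a)

lemma delNijNijDel_apply_neg_one_neg_one_neg_one (y : ∀ j, E (![-1, -1, -1] j)) :
    delNijNijDel pd a 3 ![-1, -1, -1] y = DirectSum.of E (-1) (pd ((-2 : 𝕜) •
      (a (pd (a (y 0) (y 1))) (y 2) - a (pd (a (y 0) (y 2))) (y 1) +
        a (pd (a (y 1) (y 2))) (y 0)))) := by
  have hDQ : ins 𝕜 E (delF 𝕜 E pd) (nijNijDel pd a) 3 ![-1, -1, -1] y = 0 := by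
    rw [ins_fin_three_of_isArity_one_left (delF_isArity pd),
      insTerm_eq_zero_of_left (delF_apply_of_ne pd (by rfl) (by decide) _),
      insTerm_eq_zero_of_left (delF_apply_of_ne pd (by rfl) (by decide) _),
      insTerm_eq_zero_of_left (delF_apply_of_ne pd (by rfl) (by decide) _), add_zero, add_zero]
  have hQD : ins 𝕜 E (nijNijDel pd a) (delF 𝕜 E pd) 3 ![-1, -1, -1] y =
      DirectSum.of E (-1) (pd ((-2 : 𝕜) •
        (a (pd (a (y 0) (y 1))) (y 2) - a (pd (a (y 0) (y 2))) (y 1) +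
          a (pd (a (y 1) (y 2))) (y 0)))) := by
    rw [ins_fin_three_of_isArity_one_right (nijNijDel_vanishesAt_zero pd a) (delF_isArity pd),
      insTerm_eq_of_left_eq_of
        (nijNijDel_apply_neg_one_neg_one_neg_one pd a (by rfl) (by rfl) (by rfl) (by rfl) _)
        (delF_dconsV_zero pd _),
      koszulSign_one, one_smul, delF_apply_of_eq pd (by rfl) (by rfl)]
    rfl
  rw [delNijNijDel, rnb_one_one_apply, hDQ, hQD, zero_add]

lemma delNijNijDel_apply_neg_one_neg_one_neg_two (y : ∀ j, E (![-1, -1, -2] j)) :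
    delNijNijDel pd a 3 ![-1, -1, -2] y = DirectSum.of E (-2) ((-2 : 𝕜) •
      (a (pd (a (pd (y 2)) (y 0))) (y 1) - a (pd (a (pd (y 2)) (y 1))) (y 0) +
        a (pd (a (y 0) (y 1))) (pd (y 2)))) := by
  have hDQ : ins 𝕜 E (delF 𝕜 E pd) (nijNijDel pd a) 3 ![-1, -1, -2] y =
      DirectSum.of E (-2) ((-2 : 𝕜) •
        (a (pd (a (pd (y 2)) (y 0))) (y 1) - a (pd (a (pd (y 2)) (y 1))) (y 0) +
          a (pd (a (y 0) (y 1))) (pd (y 2)))) := by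
    rw [ins_fin_three_of_isArity_one_left (delF_isArity pd),
      insTerm_eq_zero_of_left (delF_apply_of_ne pd (by rfl) (by decide) _),
      insTerm_eq_zero_of_left (delF_apply_of_ne pd (by rfl) (by decide) _),
      insTerm_eq_of_left_eq_of (delF_apply_of_eq pd (by rfl) (by rfl) _)
        (nijNijDel_apply_neg_one_neg_one_neg_one_of_eq_zero pd a (by rfl) (by rfl) (by rfl)
          (by rfl) _ rfl),
      koszulSign_swap_one_two_mul_swap_zero_one, Even.neg_one_zpow (by decide),
      Even.neg_one_zpow (by decide), one_mul, one_smul,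
      nijNijDel_apply_neg_one_neg_one_neg_one pd a (by rfl) (by rfl) (by rfl) (by rfl),
      zero_add, zero_add]
    rfl
  have hQD : ins 𝕜 E (nijNijDel pd a) (delF 𝕜 E pd) 3 ![-1, -1, -2] y = 0 := by
    rw [ins_fin_three_of_isArity_one_right (nijNijDel_vanishesAt_zero pd a) (delF_isArity pd),
      insTerm_eq_zero_of_left
        (nijNijDel_apply_neg_one_neg_one_neg_two pd a (by rfl) (by rfl) (by rfl) (by rfl) _)]
  rw [delNijNijDel, rnb_one_one_apply, hDQ, hQD, add_zero]

end Brackets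

lemma eq_zero_of_of_neg_two_smul_eq_zero {𝕜 : Type} [Field 𝕜] [CharZero 𝕜] {E : ℤ → Type}
    [∀ i, AddCommGroup (E i)] [∀ i, Module 𝕜 (E i)] {i : ℤ} {v : E i}
    (h : DirectSum.of E i ((-2 : 𝕜) • v) = 0) : v = 0 := by
  have h2 : (-2 : 𝕜) • v = 0 := DirectSum.of_injective i (h.trans (map_zero _).symm)
  exact (smul_eq_zero.mp h2).resolve_left (by norm_num)

section WeakNijenhuis

variable {𝕜 : Type} [Field 𝕜] [CharZero 𝕜] {E : ℤ → Type} [∀ i, AddCommGroup (E i)]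
  [∀ i, Module 𝕜 (E i)] {pd : E (-2) →ₗ[𝕜] E (-1)} {a : E (-1) →ₗ[𝕜] E (-1) →ₗ[𝕜] E (-2)}

lemma jacobi_of_delNijNijDel_eq_zero (h : delNijNijDel pd a = 0) (X Y Z : E (-1)) :
    pd (a (pd (a X Y)) Z - a (pd (a X Z)) Y + a (pd (a Y Z)) X) = 0 := by
  have hR := delNijNijDel_apply_neg_one_neg_one_neg_one pd a
    (Fin.cons X (Fin.cons Y (Fin.cons Z finZeroElim)))
  rw [h, map_smul] at hR
  exact eq_zero_of_of_neg_two_smul_eq_zero hR.symm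

lemma representation_of_delNijNijDel_eq_zero (h : delNijNijDel pd a = 0) (X Y : E (-1))
    (f : E (-2)) : a (pd (a (pd f) X)) Y - a (pd (a (pd f) Y)) X + a (pd (a X Y)) (pd f) = 0 := by
  have hR := delNijNijDel_apply_neg_one_neg_one_neg_two pd a
    (Fin.cons X (Fin.cons Y (Fin.cons f finZeroElim)))
  rw [h] at hR
  exact eq_zero_of_of_neg_two_smul_eq_zero hR.symm

end WeakNijenhuis

theorem statement18_general (𝕜 : Type) [Field 𝕜] [CharZero 𝕜]
    (E : ℤ → Type) [∀ i, AddCommGroup (E i)] [∀ i, Module 𝕜 (E i)]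
    (pd : E (-2) →ₗ[𝕜] E (-1))
    (a : E (-1) →ₗ[𝕜] E (-1) →ₗ[𝕜] E (-2))
    (ha : ∀ X Y : E (-1), a X Y = - a Y X)
    (hweak : rnb 𝕜 E 1 1 (delF 𝕜 E pd)
        (rnb 𝕜 E 0 1 (euler E + alF 𝕜 E a)
          (rnb 𝕜 E 0 1 (euler E + alF 𝕜 E a) (delF 𝕜 E pd))) = 0) :
    (∀ X Y Z : E (-1),
        pd (a (pd (a X Y)) Z) + pd (a (pd (a Y Z)) X) + pd (a (pd (a Z X)) Y) = 0) ∧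
      ∀ (X Y : E (-1)) (f : E (-2)),
        a (pd (a X Y)) (pd f) = a X (pd (a Y (pd f))) - a Y (pd (a X (pd f))) := by
  refine ⟨fun X Y Z => ?_, fun X Y f => ?_⟩
  · have hJ := jacobi_of_delNijNijDel_eq_zero hweak X Y Z
    rw [map_add, map_sub] at hJ
    rw [ha Z X]
    simp only [map_neg, LinearMap.neg_apply]
    rw [← hJ]
    abel
  · have hρ := representation_of_delNijNijDel_eq_zero hweak X Y f
    rw [ha (pd f) X, ha (pd f) Y] at hρ
    simp only [map_neg, LinearMap.neg_apply] at hρ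
    rw [ha X (pd (a Y (pd f))), ha Y (pd (a X (pd f))), ← sub_eq_zero, ← hρ]
    abel

/-- Let `E = E_{-2} ⊕ E_{-1}`, let `∂ : E_{-2} → E_{-1}` be a linear map
regarded as an `L∞`-structure `l₁` on `E` (with `l₂ = l₃ = 0`), and let `α` be a
skew-symmetric bilinear map `E_{-1} × E_{-1} → E_{-2}`, i.e. a symmetric vector valued
2-form of degree 0.  If `S + α` is weak Nijenhuis with respect to `∂`, then
`[X,Y] := ∂(α(X,Y))` is a Lie bracket on `E_{-1}` and `X·f := α(X,∂f)` is a representation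
of `(E_{-1},[·,·])` on `E_{-2}`. -/
theorem statement18 (𝕜 : Type) [Field 𝕜] [CharZero 𝕜]
    (E : ℤ → Type) [∀ i, AddCommGroup (E i)] [∀ i, Module 𝕜 (E i)]
    (hconc : ∀ i : ℤ, i ≠ -2 → i ≠ -1 → ∀ v : E i, v = 0)
    (pd : E (-2) →ₗ[𝕜] E (-1))
    (a : E (-1) →ₗ[𝕜] E (-1) →ₗ[𝕜] E (-2))
    (ha : ∀ X Y : E (-1), a X Y = - a Y X)
    (hweak : rnb 𝕜 E 1 1 (delF 𝕜 E pd)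
        (rnb 𝕜 E 0 1 (euler E + alF 𝕜 E a)
          (rnb 𝕜 E 0 1 (euler E + alF 𝕜 E a) (delF 𝕜 E pd))) = 0) :
    (∀ X Y Z : E (-1),
        pd (a (pd (a X Y)) Z) + pd (a (pd (a Y Z)) X) + pd (a (pd (a Z X)) Y) = 0) ∧
      ∀ (X Y : E (-1)) (f : E (-2)),
        a (pd (a X Y)) (pd f) = a X (pd (a Y (pd f))) - a Y (pd (a X (pd f))) :=
  statement18_general 𝕜 E pd a ha hweak

end RN
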